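/- Let z₁, …, zₙ be distinct complex numbers with p(zᵢ) = zᵢ and p'(zᵢ) = αᵢ. For each k with 2 ≤ k ≤ n - 1, the divided difference satisfies f[z₁, z₂, z₂, …, z_k, z_k, z_{k+1}] = Σ_{i=2}^{k} (αᵢ - 1)(zᵢ - z₁)(zᵢ - z_{k+1})/π^{k+1}_i, where π^{k+1}_i = ∏_{j=1, j≠i}^{k+1} (zᵢ - zⱼ)². -/

import Mathlib

/-!
Split `p = (p - id) + id`. Divided differences are linear in the data, and those of the identity
vanish on three or more nodes. The data of `p - id` vanish at every node and have derivative
`β = p' - 1`. For such data, on any node list in which each node occurs at most twice and repeated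
nodes are adjacent, the divided difference is `∑ β x / ∏_{y ≠ x} (x - y)`, summed over the doubled
nodes `x`, the product running over the remaining nodes with multiplicity. This closed form
satisfies the divided-difference recursion by the partial-fraction identity
`1 / ((x - a) (x - b)) = (1 / (x - b) - 1 / (x - a)) / (b - a)`.
-/

open Polynomial Finset

/-- Divided differences with possibly repeated (adjacent) nodes:
`g` gives the function values and `d` the derivative values at doubled nodes. -/
noncomputable def dd (g d : ℂ → ℂ) : List ℂ → ℂ
  | [] => 0
  | [z] => g z
  | [z, w] => if z = w then d z else (g w - g z) / (w - z)
  | z :: w :: u :: rest =>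
    (dd g d (w :: u :: rest) - dd g d ((z :: w :: u :: rest).dropLast)) /
      ((u :: rest).getLast (by simp) - z)
termination_by l => l.length

theorem dd_add (g₁ g₂ d₁ d₂ : ℂ → ℂ) (l : List ℂ) :
    dd (g₁ + g₂) (d₁ + d₂) l = dd g₁ d₁ l + dd g₂ d₂ l := by
  induction l using dd.induct with
  | case1 => simp [dd]
  | case2 z => simp [dd]
  | case3 w => simp [dd]
  | case4 z w hzw =>
    simp only [dd, if_neg hzw, Pi.add_apply]
    ring
  | case5 z w u rest ih₁ ih₂ =>
    rw [dd, dd, dd, ih₁, ih₂]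
    ring

theorem dd_id_eq_of_two_le_length (l : List ℂ) (hl : 2 ≤ l.length) :
    dd (fun w => w) (fun _ => 1) l = if l.length = 2 then 1 else 0 := by
  induction l using dd.induct with
  | case1 | case2 => simp at hl
  | case3 w => simp [dd]
  | case4 z w hzw => simp [dd, hzw, sub_ne_zero.mpr (Ne.symm hzw)]
  | case5 z w u rest ih₁ ih₂ =>
    rw [dd, ih₁ (by simp), ih₂ (by simp)]
    simp

theorem dd_id_eq_zero (l : List ℂ) (hl : 3 ≤ l.length) :
    dd (fun w => w) (fun _ => 1) l = 0 := by
  rw [dd_id_eq_of_two_le_length l (by omega), if_neg (by omega)]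

section HermiteSum

variable {K : Type*} [Field K] [DecidableEq K]

noncomputable def prodSubOthers (s : Multiset K) (x : K) : K :=
  ((s.filter (· ≠ x)).map (x - ·)).prod

theorem prodSubOthers_cons_self (s : Multiset K) (x : K) :
    prodSubOthers (x ::ₘ s) x = prodSubOthers s x := by
  simp [prodSubOthers]

theorem prodSubOthers_cons_of_ne (s : Multiset K) {x y : K} (h : y ≠ x) :
    prodSubOthers (y ::ₘ s) x = (x - y) * prodSubOthers s x := by
  rw [prodSubOthers, Multiset.filter_cons_of_pos (p := (· ≠ x)) s h, Multiset.map_cons,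
    Multiset.prod_cons]
  rfl

theorem prodSubOthers_ne_zero (s : Multiset K) (x : K) : prodSubOthers s x ≠ 0 :=
  Multiset.prod_ne_zero fun h => by
    obtain ⟨y, hy, hxy⟩ := Multiset.mem_map.mp h
    exact (Multiset.mem_filter.mp hy).2 (sub_eq_zero.mp hxy).symm

noncomputable def hermiteWeight (β : K → K) (s : Multiset K) (x : K) : K :=
  if s.count x = 2 then β x / prodSubOthers s x else 0

-- The divided difference of data vanishing at the nodes `s`, with derivative `β` at the doubled ones.
noncomputable def hermiteSum (β : K → K) (s : Multiset K) : K :=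
  ∑ x ∈ s.toFinset, hermiteWeight β s x

theorem hermiteSum_eq_sum_of_subset (β : K → K) {s : Multiset K} {T : Finset K}
    (h : s.toFinset ⊆ T) : hermiteSum β s = ∑ x ∈ T, hermiteWeight β s x :=
  Finset.sum_subset h fun x _ hx => by
    rw [hermiteWeight, if_neg (by simp_all)]

theorem hermiteSum_eq_zero_of_nodup (β : K → K) {s : Multiset K} (hs : s.Nodup) :
    hermiteSum β s = 0 :=
  Finset.sum_eq_zero fun x hx => by
    rw [hermiteWeight, Multiset.count_eq_one_of_mem hs (Multiset.mem_toFinset.mp hx),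
      if_neg (by norm_num)]

theorem hermiteSum_pair_self (β : K → K) (x : K) : hermiteSum β ↑[x, x] = β x := by
  have hs : (↑[x, x] : Multiset K) = x ::ₘ x ::ₘ 0 := rfl
  have hP : prodSubOthers (x ::ₘ x ::ₘ 0) x = 1 := by
    rw [prodSubOthers_cons_self, prodSubOthers_cons_self]
    simp [prodSubOthers]
  rw [hs, hermiteSum, Multiset.toFinset_cons, Multiset.toFinset_cons, Multiset.toFinset_zero,
    insert_empty_eq, Finset.pair_eq_singleton, Finset.sum_singleton, hermiteWeight, hP,
    if_pos (by simp), div_one]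

theorem hermiteWeight_cons_cons (β : K → K) {a b : K} {s : Multiset K} (hab : a ≠ b)
    (ha : s.count a ≤ 1) (hb : s.count b ≤ 1) (x : K) :
    hermiteWeight β (a ::ₘ b ::ₘ s) x =
      (hermiteWeight β (b ::ₘ s) x - hermiteWeight β (a ::ₘ s) x) / (b - a) := by
  have hba : b - a ≠ 0 := sub_ne_zero.mpr hab.symm
  have hP := prodSubOthers_ne_zero s x
  by_cases hxa : x = a
  · subst hxa
    simp only [hermiteWeight, Multiset.count_cons_self, Multiset.count_cons_of_ne hab,
      prodSubOthers_cons_self, prodSubOthers_cons_of_ne _ hab.symm,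
      if_neg (show s.count x ≠ 2 by omega)]
    split_ifs
    · field_simp
      ring
    · simp
  by_cases hxb : x = b
  · subst hxb
    simp only [hermiteWeight, Multiset.count_cons_self, Multiset.count_cons_of_ne hab.symm,
      prodSubOthers_cons_self, prodSubOthers_cons_of_ne _ hab,
      if_neg (show s.count x ≠ 2 by omega)]
    split_ifs
    · field_simp
      ring
    · simp
  · have hxa' : x - a ≠ 0 := sub_ne_zero.mpr hxa
    have hxb' : x - b ≠ 0 := sub_ne_zero.mpr hxb
    simp only [hermiteWeight, Multiset.count_cons_of_ne hxa, Multiset.count_cons_of_ne hxb,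
      prodSubOthers_cons_of_ne _ (Ne.symm hxa), prodSubOthers_cons_of_ne _ (Ne.symm hxb)]
    split_ifs
    · field_simp
      ring
    · simp

theorem hermiteSum_cons_cons (β : K → K) {a b : K} {s : Multiset K} (hab : a ≠ b)
    (ha : s.count a ≤ 1) (hb : s.count b ≤ 1) :
    hermiteSum β (a ::ₘ b ::ₘ s) =
      (hermiteSum β (b ::ₘ s) - hermiteSum β (a ::ₘ s)) / (b - a) := by
  have hsub : ∀ t, t ≤ a ::ₘ b ::ₘ s → t.toFinset ⊆ (a ::ₘ b ::ₘ s).toFinset :=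
    fun t ht => Multiset.toFinset_subset.mpr (Multiset.subset_of_le ht)
  rw [hermiteSum_eq_sum_of_subset β subset_rfl,
    hermiteSum_eq_sum_of_subset β (hsub _ (Multiset.cons_le_cons _ (Multiset.le_cons_self _ _))),
    hermiteSum_eq_sum_of_subset β (hsub _ (Multiset.le_cons_self _ _)),
    ← Finset.sum_sub_distrib, Finset.sum_div]
  exact Finset.sum_congr rfl fun x _ => hermiteWeight_cons_cons β hab ha hb x

theorem hermiteSum_map {ι : Type*} [DecidableEq ι] (β : K → K) (z : ι → K) {N : Multiset ι}
    (hz : Set.InjOn z {i | i ∈ N}) :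
    hermiteSum β (N.map z) = ∑ i ∈ N.toFinset,
      if N.count i = 2 then β (z i) / ((N.filter (· ≠ i)).map fun j => z i - z j).prod else 0 := by
  rw [hermiteSum, Multiset.toFinset_map,
    Finset.sum_image fun i hi j hj h => hz (by simpa using hi) (by simpa using hj) h]
  refine Finset.sum_congr rfl fun i hi => ?_
  have hi : i ∈ N := Multiset.mem_toFinset.mp hi
  rw [hermiteWeight, Multiset.count_map_eq_count z N hz i hi, prodSubOthers, Multiset.filter_map,
    Multiset.map_map]
  congr 4
  exact Multiset.filter_congr fun j hj => hz.ne_iff hj hi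

end HermiteSum

-- Each node occurs at most twice, and the two occurrences of a doubled node are adjacent.
def HermiteNodes {α : Type*} (l : List α) : Prop := ∀ x y : α, ¬[x, y, x].Sublist l

namespace HermiteNodes

variable {α : Type*} {l l' : List α}

theorem sublist (hl : HermiteNodes l) (h : l'.Sublist l) : HermiteNodes l' :=
  fun x y hxy => hl x y (hxy.trans h)

theorem singleton (x : α) : HermiteNodes [x] :=
  fun _ _ h => by simpa using h.length_le

theorem cons {x : α} (hx : x ∉ l) (hl : HermiteNodes l) : HermiteNodes (x :: l) := by
  intro a b h
  rcases List.sublist_cons_iff.mp h with h | ⟨r, hr, h⟩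
  · exact hl a b h
  · obtain ⟨rfl, rfl⟩ := List.cons_eq_cons.mp hr
    exact hx (h.subset (by simp))

theorem cons_cons {x : α} (hx : x ∉ l) (hl : HermiteNodes l) : HermiteNodes (x :: x :: l) := by
  intro a b h
  rcases List.sublist_cons_iff.mp h with h | ⟨r, hr, h⟩
  · exact cons hx hl a b h
  · obtain ⟨rfl, rfl⟩ := List.cons_eq_cons.mp hr
    rcases List.sublist_cons_iff.mp h with h | ⟨r, hr, h⟩
    · exact hx (h.subset (by simp))
    · obtain ⟨rfl, rfl⟩ := List.cons_eq_cons.mp hr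
      exact hx (h.subset (by simp))

theorem map {β : Type*} {f : α → β} (hl : HermiteNodes l) (hf : Set.InjOn f {x | x ∈ l}) :
    HermiteNodes (l.map f) := by
  intro x y h
  obtain ⟨l', hl', e⟩ := List.sublist_map_iff.mp h
  rcases l' with _ | ⟨a, _ | ⟨b, _ | ⟨c, _ | _⟩⟩⟩ <;> simp only [List.map_cons, List.map_nil,
    List.cons.injEq, reduceCtorEq, and_false, and_true] at e
  obtain ⟨rfl, rfl, hac⟩ := e
  have hs := hl'.subset
  obtain rfl : a = c := hf (hs (by simp)) (hs (by simp)) hac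
  exact hl a b hl'

theorem head_ne_getLast {x y c : α} (hl : HermiteNodes (x :: y :: (l ++ [c]))) : x ≠ c := by
  rintro rfl
  exact hl x y (by simp)

theorem count_tail_le_one [DecidableEq α] {x : α} (hl : HermiteNodes (x :: l)) :
    l.count x ≤ 1 := by
  by_contra! h
  exact hl x x ((List.replicate_sublist_iff.mpr h).cons_cons x)

theorem count_dropLast_le_one [DecidableEq α] {x : α} (hl : HermiteNodes (l ++ [x])) :
    l.count x ≤ 1 := by
  by_contra! h
  exact hl x x ((List.replicate_sublist_iff.mpr h).append_right [x])

end HermiteNodes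

theorem dd_eq_hermiteSum (d : ℂ → ℂ) {g : ℂ → ℂ} {l : List ℂ} (hl : HermiteNodes l)
    (hg : ∀ x ∈ l, g x = 0) : dd g d l = hermiteSum d l := by
  induction l using dd.induct with
  | case1 => simp [dd, hermiteSum]
  | case2 z => simp [dd, hg, hermiteSum_eq_zero_of_nodup]
  | case3 w => simpa [dd] using (hermiteSum_pair_self d w).symm
  | case4 z w hzw => simp [dd, hzw, hg, hermiteSum_eq_zero_of_nodup]
  | case5 z w u rest ih₁ ih₂ =>
    rw [dd, ih₁ (hl.sublist (List.sublist_cons_self _ _)) fun x hx => hg x (by simp_all),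
      ih₂ (hl.sublist (List.dropLast_sublist _)) fun x hx => hg x (List.dropLast_subset _ hx)]
    obtain ⟨m, c, hr⟩ : ∃ m c, u :: rest = m ++ [c] :=
      ⟨_, _, (List.dropLast_append_getLast (List.cons_ne_nil u rest)).symm⟩
    simp only [hr, List.getLast_concat, List.dropLast_cons_cons] at hl ⊢
    rw [← List.cons_append] at hl
    rw [← List.cons_append, List.dropLast_concat]
    have hz : HermiteNodes (z :: w :: m) := hl.sublist (by simp)
    have hc : HermiteNodes (w :: m ++ [c]) := hl.sublist (List.sublist_cons_self _ _)
    simp only [← Multiset.cons_coe, Multiset.coe_eq_coe.mpr (List.perm_append_singleton c (w :: m))]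
    exact (hermiteSum_cons_cons d hl.head_ne_getLast (by simpa using hz.count_tail_le_one)
      (by simpa using hc.count_dropLast_le_one)).symm

def middleDoubledIndices (k : ℕ) : List ℕ :=
  0 :: (((List.range' 1 (k - 1)).flatMap fun i => [i, i]) ++ [k])

theorem map_middleDoubledIndices {α : Type*} (z : ℕ → α) (k : ℕ) :
    (middleDoubledIndices k).map z =
      z 0 :: (((List.range' 1 (k - 1)).flatMap fun i => [z i, z i]) ++ [z k]) := by
  simp [middleDoubledIndices, List.map_flatMap]

theorem mem_flatMap_range'_pair {i s m : ℕ} :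
    i ∈ (List.range' s m).flatMap (fun j => [j, j]) ↔ s ≤ i ∧ i < s + m := by
  simp [List.mem_range'_1]

theorem le_of_mem_middleDoubledIndices {i k : ℕ} (h : i ∈ middleDoubledIndices k) : i ≤ k := by
  simp only [middleDoubledIndices, List.mem_cons, List.mem_append, mem_flatMap_range'_pair,
    List.not_mem_nil, or_false] at h
  omega

theorem length_middleDoubledIndices {k : ℕ} (hk : 1 ≤ k) :
    (middleDoubledIndices k).length = 2 * k := by
  simp only [middleDoubledIndices, List.length_cons, List.length_append, List.length_flatMap,
    List.length_nil, List.map_const', List.length_range', List.sum_replicate, smul_eq_mul]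
  omega

theorem hermiteNodes_flatMap_range'_append (k : ℕ) :
    ∀ s m, s + m ≤ k → HermiteNodes (((List.range' s m).flatMap fun i => [i, i]) ++ [k])
  | _, 0, _ => by simpa using HermiteNodes.singleton k
  | s, m + 1, h => by
    rw [List.range'_succ, List.flatMap_cons, List.append_assoc]
    refine .cons_cons ?_ (hermiteNodes_flatMap_range'_append k (s + 1) m (by omega))
    simp only [List.append_eq, List.nil_append, List.mem_append, mem_flatMap_range'_pair,
      List.mem_singleton]
    omega

theorem hermiteNodes_middleDoubledIndices {k : ℕ} (hk : 1 ≤ k) :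
    HermiteNodes (middleDoubledIndices k) := by
  refine .cons ?_ (hermiteNodes_flatMap_range'_append k 1 (k - 1) (by omega))
  simp only [List.mem_append, mem_flatMap_range'_pair, List.mem_singleton]
  omega

theorem coe_middleDoubledIndices (k : ℕ) :
    (middleDoubledIndices k : Multiset ℕ) = 0 ::ₘ k ::ₘ ((Ico 1 k).val + (Ico 1 k).val) := by
  have h : ∀ l : List ℕ, ((l.flatMap fun i => [i, i] : List ℕ) : Multiset ℕ) = ↑l + ↑l := by
    intro l
    induction l with
    | nil => rfl
    | cons i l ih =>
      simp only [List.flatMap_cons, List.cons_append, List.nil_append, ← Multiset.cons_coe, ih,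
        Multiset.cons_add, Multiset.add_cons]
  rw [middleDoubledIndices, ← Multiset.cons_coe, ← Multiset.coe_add, h,
    show (Ico 1 k).val = ↑(List.range' 1 (k - 1)) from rfl, Multiset.coe_singleton,
    add_comm _ ({k} : Multiset ℕ), Multiset.singleton_add]

theorem count_middleDoubledIndices {i k : ℕ} (hk : 1 ≤ k) (hi : i ∈ middleDoubledIndices k) :
    (middleDoubledIndices k : Multiset ℕ).count i = if i ∈ Ico 1 k then 2 else 1 := by
  have hik : i ≤ k := le_of_mem_middleDoubledIndices hi
  rw [coe_middleDoubledIndices, Multiset.count_cons, Multiset.count_cons, Multiset.count_add,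
    Multiset.count_eq_of_nodup (Ico 1 k).nodup]
  simp only [Finset.mem_val, Finset.mem_Ico]
  split_ifs <;> omega

theorem filter_ne_middleDoubledIndices {i k : ℕ} (hi : i ∈ Ico 1 k) :
    (middleDoubledIndices k : Multiset ℕ).filter (· ≠ i) =
      0 ::ₘ k ::ₘ (((Ico 1 k).erase i).val + ((Ico 1 k).erase i).val) := by
  have hi' := Finset.mem_Ico.mp hi
  rw [coe_middleDoubledIndices, Multiset.filter_cons_of_pos (p := (· ≠ i)) _ (by omega),
    Multiset.filter_cons_of_pos (p := (· ≠ i)) _ (by omega), Multiset.filter_add,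
    ← Finset.filter_val, Finset.filter_ne']

theorem hermiteSum_map_middleDoubledIndices (β : ℂ → ℂ) (z : ℕ → ℂ) {k : ℕ} (hk : 1 ≤ k)
    (hz : Set.InjOn z (Set.Iic k)) :
    hermiteSum β ↑((middleDoubledIndices k).map z) =
      ∑ i ∈ Ico 1 k, β (z i) * (z i - z 0) * (z i - z k) /
        ∏ j ∈ (range (k + 1)).erase i, (z i - z j) ^ 2 := by
  have hne : ∀ i j, i ≤ k → j ≤ k → i ≠ j → z i - z j ≠ 0 := fun i j hi hj hij =>
    sub_ne_zero.mpr (hz.ne hi hj hij)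
  rw [← Multiset.map_coe,
    hermiteSum_map β z (hz.mono fun i hi => le_of_mem_middleDoubledIndices hi)]
  have hS : Ico 1 k ⊆ (middleDoubledIndices k : Multiset ℕ).toFinset := fun i hi => by
    simp [coe_middleDoubledIndices, hi]
  rw [← Finset.sum_subset hS fun i hi hiS => by
    rw [count_middleDoubledIndices hk (by simpa using hi), if_neg hiS, if_neg (by norm_num)]]
  refine Finset.sum_congr rfl fun i hi => ?_
  have hi' := Finset.mem_Ico.mp hi
  have hrange : (range (k + 1)).erase i = insert 0 (insert k ((Ico 1 k).erase i)) := by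
    ext j
    simp only [mem_erase, mem_range, mem_insert, mem_Ico]
    omega
  have hP : ∏ j ∈ (Ico 1 k).erase i, (z i - z j) ≠ 0 := Finset.prod_ne_zero_iff.mpr fun j hj => by
    have := Finset.mem_erase.mp hj
    exact hne i j hi'.2.le (Finset.mem_Ico.mp this.2).2.le this.1.symm
  rw [count_middleDoubledIndices hk (by simpa using hS hi), if_pos hi, if_pos rfl,
    filter_ne_middleDoubledIndices hi, hrange, Multiset.map_cons, Multiset.map_cons,
    Multiset.prod_cons, Multiset.prod_cons, Multiset.map_add, Multiset.prod_add,
    Finset.prod_map_val, Finset.prod_insert (by simp only [mem_insert, mem_erase, mem_Ico]; omega),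
    Finset.prod_insert (by simp), Finset.prod_pow]
  have hi0 := hne i 0 hi'.2.le (Nat.zero_le k) (by omega)
  have hik := hne i k hi'.2.le le_rfl (by omega)
  field_simp

/-- Indices run over `0, …, k`: the paper's `zᵢ` is `z (i - 1)` here. -/
theorem divided_difference_middle_doubled (n : ℕ) (p : ℂ[X]) (z : ℕ → ℂ)
    (hz : ∀ i < n, ∀ j < n, z i = z j → i = j)
    (hfix : ∀ i < n, p.eval (z i) = z i)
    (α : ℕ → ℂ) (hα : ∀ i < n, p.derivative.eval (z i) = α i) :
    ∀ k, 2 ≤ k → k ≤ n - 1 →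
      dd (fun w => p.eval w) (fun w => p.derivative.eval w)
          (z 0 :: (((List.range' 1 (k - 1)).flatMap fun i => [z i, z i]) ++ [z k])) =
        ∑ i ∈ Finset.Ico 1 k,
          (α i - 1) * (z i - z 0) * (z i - z k) /
            ∏ j ∈ (Finset.range (k + 1)).erase i, (z i - z j) ^ 2 := by
  intro k hk hkn
  have hzk : Set.InjOn z (Set.Iic k) := fun i hi j hj h =>
    hz i (by rw [Set.mem_Iic] at hi; omega) j (by rw [Set.mem_Iic] at hj; omega) h
  rw [← map_middleDoubledIndices]
  set L := (middleDoubledIndices k).map z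
  have hsplit : dd (fun w => p.eval w) (fun w => p.derivative.eval w) L =
      dd (fun w => p.eval w - w) (fun w => p.derivative.eval w - 1) L +
        dd (fun w => w) (fun _ => 1) L := by
    rw [← dd_add]
    congr <;> funext w <;> simp
  have hL : HermiteNodes L := (hermiteNodes_middleDoubledIndices (by omega)).map
    (hzk.mono fun i hi => le_of_mem_middleDoubledIndices hi)
  have hvanish : ∀ x ∈ L, p.eval x - x = 0 := by
    intro x hx
    obtain ⟨i, hi, rfl⟩ := List.mem_map.mp hx
    rw [hfix i (by have := le_of_mem_middleDoubledIndices hi; omega), sub_self]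
  rw [hsplit, dd_id_eq_zero L
      (by rw [List.length_map, length_middleDoubledIndices (by omega)]; omega), add_zero,
    dd_eq_hermiteSum _ hL hvanish, hermiteSum_map_middleDoubledIndices _ z (by omega) hzk]
  refine Finset.sum_congr rfl fun i hi => ?_
  rw [hα i (by rw [Finset.mem_Ico] at hi; omega)]
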